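/- Let M be a graded A-module and T ⊊ K proper graded A-submodules of M. If K is a graded classical weakly prime A-submodule of M, then K/T is a graded classical weakly prime A-submodule of M/T. -/

import Mathlib

section GCWP

variable {G : Type*} [AddGroup G] [DecidableEq G]
variable {A : Type*} [Ring A] {M : Type*} [AddCommGroup M] [Module A M]

/-- A submodule is graded (homogeneous) if it is generated by its homogeneous elements. -/
def IsGrSub (ℳ : G → AddSubgroup M) (K : Submodule A M) : Prop :=
  K ≤ Submodule.span A ((K : Set M) ∩ {m | SetLike.IsHomogeneousElem ℳ m})

/-- `K` is a graded classical weakly prime submodule. -/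
def IsGCWP (𝒜 : G → AddSubgroup A) (ℳ : G → AddSubgroup M) (K : Submodule A M) : Prop :=
  K ≠ ⊤ ∧ IsGrSub ℳ K ∧
  ∀ x y : A, SetLike.IsHomogeneousElem 𝒜 x → SetLike.IsHomogeneousElem 𝒜 y →
    ∀ L : Submodule A M, IsGrSub ℳ L →
      (∃ a : A, ∃ l ∈ L, (x * a * y) • l ≠ 0) →
      (∀ a : A, ∀ l ∈ L, (x * a * y) • l ∈ K) →
      (∀ l ∈ L, x • l ∈ K) ∨ (∀ l ∈ L, y • l ∈ K)

/-- `K` is a graded classical prime submodule. -/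
def IsGCP (𝒜 : G → AddSubgroup A) (ℳ : G → AddSubgroup M) (K : Submodule A M) : Prop :=
  K ≠ ⊤ ∧ IsGrSub ℳ K ∧
  ∀ x y : A, SetLike.IsHomogeneousElem 𝒜 x → SetLike.IsHomogeneousElem 𝒜 y →
    ∀ L : Submodule A M, IsGrSub ℳ L →
      (∀ a : A, ∀ l ∈ L, (x * a * y) • l ∈ K) →
      (∀ l ∈ L, x • l ∈ K) ∨ (∀ l ∈ L, y • l ∈ K)

/-- `(x, y, L)` is a graded classical triple zero of `K`. -/
def TripleZero (K : Submodule A M) (x y : A) (L : Submodule A M) : Prop :=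
  (∀ a : A, ∀ l ∈ L, (x * a * y) • l = 0) ∧
    ¬ (∀ l ∈ L, x • l ∈ K) ∧ ¬ (∀ l ∈ L, y • l ∈ K)

/-- `L` is an `A_e`-submodule of `M_g` (as an additive subgroup of `M`). -/
def IsAeSub (𝒜 : G → AddSubgroup A) (ℳ : G → AddSubgroup M) (g : G) (L : AddSubgroup M) : Prop :=
  (L : Set M) ⊆ (ℳ g : Set M) ∧ ∀ a ∈ 𝒜 0, ∀ l ∈ L, a • l ∈ L

/-- `L` is a faithful `A_e`-module. -/
def AeFaithful (𝒜 : G → AddSubgroup A) (L : AddSubgroup M) : Prop :=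
  ∀ a ∈ 𝒜 0, (∀ l ∈ L, a • l = 0) → a = 0

/-- `I` is an ideal of `A_e` (as an additive subgroup of `A`). -/
def IsAeIdeal (𝒜 : G → AddSubgroup A) (I : AddSubgroup A) : Prop :=
  (I : Set A) ⊆ (𝒜 0 : Set A) ∧ ∀ a ∈ 𝒜 0, ∀ r ∈ I, a * r ∈ I ∧ r * a ∈ I

/-- `K` is a `g`-classical weakly prime submodule of `M`. -/
def IsgCWP (𝒜 : G → AddSubgroup A) (ℳ : G → AddSubgroup M) (g : G) (K : Submodule A M) :
    Prop :=
  IsGrSub ℳ K ∧ ¬ ((ℳ g : Set M) ⊆ (K : Set M)) ∧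
  ∀ x ∈ 𝒜 0, ∀ y ∈ 𝒜 0, ∀ L : AddSubgroup M, IsAeSub 𝒜 ℳ g L →
    (∃ a ∈ 𝒜 0, ∃ l ∈ L, (x * a * y) • l ≠ 0) →
    (∀ a ∈ 𝒜 0, ∀ l ∈ L, (x * a * y) • l ∈ K) →
    (∀ l ∈ L, x • l ∈ K) ∨ (∀ l ∈ L, y • l ∈ K)

/-- `P` is a weakly prime (proper) left ideal of `A_e`, given as a subset of `A`. -/
def IsWeaklyPrimeAe (𝒜 : G → AddSubgroup A) (P : Set A) : Prop :=
  P ⊆ (𝒜 0 : Set A) ∧ ¬ ((𝒜 0 : Set A) ⊆ P) ∧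
  (0 : A) ∈ P ∧ (∀ p ∈ P, ∀ q ∈ P, p + q ∈ P) ∧ (∀ p ∈ P, -p ∈ P) ∧
  (∀ a ∈ 𝒜 0, ∀ p ∈ P, a * p ∈ P) ∧
  ∀ I J : AddSubgroup A, IsAeIdeal 𝒜 I → IsAeIdeal 𝒜 J →
    (∃ i ∈ I, ∃ j ∈ J, i * j ≠ 0) → (∀ i ∈ I, ∀ j ∈ J, i * j ∈ P) →
    (I : Set A) ⊆ P ∨ (J : Set A) ⊆ P

end GCWP

section GW2A
variable {G : Type*} [AddGroup G] [DecidableEq G]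
variable {A : Type*} [Ring A] {M : Type*} [AddCommGroup M] [Module A M]

/-- `K` is a graded weakly 2-absorbing submodule. -/
def IsGW2A (𝒜 : G → AddSubgroup A) (ℳ : G → AddSubgroup M) (K : Submodule A M) : Prop :=
  K ≠ ⊤ ∧ IsGrSub ℳ K ∧
  ∀ x y : A, SetLike.IsHomogeneousElem 𝒜 x → SetLike.IsHomogeneousElem 𝒜 y →
    ∀ L : Submodule A M, IsGrSub ℳ L →
      (∃ a : A, ∃ l ∈ L, (x * a * y) • l ≠ 0) →
      (∀ a : A, ∀ l ∈ L, (x * a * y) • l ∈ K) →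
      (∀ l ∈ L, x • l ∈ K) ∨ (∀ l ∈ L, y • l ∈ K) ∨
        (∀ a : A, ∀ m : M, (x * a * y) • m ∈ K)

end GW2A

/-! Everything is pulled back along the surjection `f`: a test submodule `L` of `N` is the image
of `L.comap f`, and `ker f ≤ K` gives `f m ∈ K.map f ↔ m ∈ K`, so each condition on `K.map f`
tested on `L` is the same condition on `K` tested on `L.comap f`. -/

section Transfer

variable {G A M N : Type*} [Ring A] [AddCommGroup M] [Module A M] [AddCommGroup N] [Module A N]
  {ℳ : G → AddSubgroup M}

theorem IsGrSub.map {K : Submodule A M} (hK : IsGrSub ℳ K) (f : M →ₗ[A] N) :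
    IsGrSub (fun g => (ℳ g).map f.toAddMonoidHom) (K.map f) := by
  rw [IsGrSub, Submodule.map_le_iff_le_comap]
  refine hK.trans (Submodule.span_le.2 ?_)
  rintro m ⟨hmK, g, hmg⟩
  exact Submodule.subset_span ⟨Submodule.mem_map_of_mem hmK, g, m, hmg, rfl⟩

theorem IsGrSub.comap {f : M →ₗ[A] N} {L : Submodule A N}
    (hL : IsGrSub (fun g => (ℳ g).map f.toAddMonoidHom) L)
    (hker : IsGrSub ℳ (LinearMap.ker f)) : IsGrSub ℳ (L.comap f) := by
  set S := (L.comap f : Set M) ∩ {m | SetLike.IsHomogeneousElem ℳ m}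
  have hL_le : L ≤ (Submodule.span A S).map f := by
    refine hL.trans ?_
    rw [Submodule.map_span]
    refine Submodule.span_mono ?_
    rintro _ ⟨hmL, g, m, hmg, rfl⟩
    exact ⟨m, ⟨hmL, g, hmg⟩, rfl⟩
  have hker_le : LinearMap.ker f ≤ Submodule.span A S :=
    hker.trans (Submodule.span_mono (Set.inter_subset_inter_left _ (LinearMap.ker_le_comap f)))
  exact (Submodule.comap_mono hL_le).trans (Submodule.comap_map_eq_self hker_le).le

theorem IsGCWP.map_of_surjective {𝒜 : G → AddSubgroup A} {K : Submodule A M}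
    (hK : IsGCWP 𝒜 ℳ K) {f : M →ₗ[A] N} (hf : Function.Surjective f)
    (hker : IsGrSub ℳ (LinearMap.ker f)) (hker_le : LinearMap.ker f ≤ K) :
    IsGCWP 𝒜 (fun g => (ℳ g).map f.toAddMonoidHom) (K.map f) := by
  obtain ⟨hK_ne_top, hK_gr, hK_prime⟩ := hK
  have apply_mem_map_iff (m : M) : f m ∈ K.map f ↔ m ∈ K := by
    rw [← Submodule.mem_comap, Submodule.comap_map_eq_self hker_le]
  have forall_mem_iff (L : Submodule A N) (P : N → Prop) :
      (∀ l ∈ L, P l) ↔ ∀ m ∈ L.comap f, P (f m) :=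
    ⟨fun h m hm => h _ hm, fun h l hl => by obtain ⟨m, rfl⟩ := hf l; exact h m hl⟩
  have smul_mem_iff (r : A) (L : Submodule A N) :
      (∀ l ∈ L, r • l ∈ K.map f) ↔ ∀ m ∈ L.comap f, r • m ∈ K := by
    simp only [forall_mem_iff L, ← map_smul, apply_mem_map_iff]
  refine ⟨?_, hK_gr.map f, ?_⟩
  · rwa [ne_eq, LinearMap.map_eq_top_iff (LinearMap.range_eq_top.2 hf), sup_of_le_left hker_le]
  intro x y hx hy L hL_gr hne hxay
  simp only [smul_mem_iff] at hxay ⊢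
  refine hK_prime x y hx hy _ (hL_gr.comap hker) ?_ hxay
  obtain ⟨a, l, hl, hne⟩ := hne
  obtain ⟨m, rfl⟩ := hf l
  exact ⟨a, m, hl, fun h => hne (by rw [← map_smul, h, map_zero])⟩

end Transfer

section Theorems

variable {G : Type*} [AddGroup G] [DecidableEq G]
variable {A : Type*} [Ring A] {M : Type*} [AddCommGroup M] [Module A M]
variable (𝒜 : G → AddSubgroup A) (ℳ : G → AddSubgroup M)
variable [SetLike.GradedMonoid 𝒜] [SetLike.GradedSMul 𝒜 ℳ]
variable [DirectSum.Decomposition 𝒜] [DirectSum.Decomposition ℳ]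

theorem stmt6 (T K : Submodule A M) (hTgr : IsGrSub ℳ T)
    (hTK : T < K) (hK : IsGCWP 𝒜 ℳ K) :
    IsGCWP 𝒜 (fun g => (ℳ g).map T.mkQ.toAddMonoidHom) (K.map T.mkQ) :=
  hK.map_of_surjective T.mkQ_surjective (by rwa [Submodule.ker_mkQ])
    (by rw [Submodule.ker_mkQ]; exact hTK.le)

end Theorems
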